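/- Let (X, ρ) be a length space and c : X → Y a concept. Then for every r > 0, the set { x ∈ X : m_c(x) < r } equals the open r-thickening of the boundary set: { x ∈ X : ∃ z ∈ ∂X, ρ(x, z) < r }. -/

import Mathlib

/-!
A point of margin `< r` has a differently labelled point `x'` within distance `< r`, hence a
path from `x` to `x'` of length `< r`. The concept is locally constant off the boundary, so
along this path (a connected set) it can only change labels by passing through a boundary
point, which lies within distance `< r` of `x`. Conversely the margin is `1`-Lipschitz in the
sense `m_c(x) ≤ ρ(x, z) + m_c(z)`, so points within `r` of the boundary have margin `< r`.
-/

open scoped ENNReal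

/-- The margin of a point `x`: the infimum distance (in `[0,∞]`) to points of a
different class under the concept `c`; `∞` if no such point exists. -/
noncomputable def margin {X Y : Type*} [MetricSpace X] (c : X → Y) (x : X) : ℝ≥0∞ :=
  ⨅ (x' : X) (_ : c x' ≠ c x), edist x x'

/-- `(X, ρ)` is a length space: the distance between two points is the infimum of the
lengths (total variations) of continuous paths `γ : [0,1] → X` joining them. -/
def IsLengthSpace (X : Type*) [MetricSpace X] : Prop :=
  ∀ x x' : X, edist x x' =
    ⨅ (γ : ℝ → X) (_ : ContinuousOn γ (Set.Icc 0 1)) (_ : γ 0 = x) (_ : γ 1 = x'),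
      eVariationOn γ (Set.Icc 0 1)

section Margin

variable {X Y : Type*} [MetricSpace X] (c : X → Y)

lemma margin_lt_iff {x : X} {r : ℝ≥0∞} :
    margin c x < r ↔ ∃ x', c x' ≠ c x ∧ edist x x' < r := by
  simp [margin, iInf_lt_iff]

lemma margin_le_edist {x w : X} (h : c w ≠ c x) : margin c x ≤ edist x w :=
  iInf₂_le w h

lemma margin_le_edist_add_margin (x z : X) : margin c x ≤ edist x z + margin c z := by
  conv_rhs => rw [margin, ENNReal.add_iInf]; enter [1, w]; rw [ENNReal.add_iInf]
  refine le_iInf₂ fun w hw => ?_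
  by_cases hzx : c z = c x
  · calc margin c x ≤ edist x w := margin_le_edist c (hzx ▸ hw)
      _ ≤ edist x z + edist z w := edist_triangle x z w
  · exact (margin_le_edist c hzx).trans le_self_add

lemma eventually_eq_of_margin_ne_zero {z : X} (hz : margin c z ≠ 0) :
    ∀ᶠ w in nhds z, c w = c z := by
  filter_upwards [Metric.eball_mem_nhds z (pos_iff_ne_zero.mpr hz)] with w hw
  by_contra hne
  exact (margin_le_edist c hne).not_gt (by rwa [edist_comm])

lemma IsPreconnected.exists_margin_eq_zero {S : Set X} (hS : IsPreconnected S) {x y : X}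
    (hx : x ∈ S) (hy : y ∈ S) (hxy : c x ≠ c y) : ∃ z ∈ S, margin c z = 0 := by
  by_contra! hS_pos
  have : PreconnectedSpace S := isPreconnected_iff_preconnectedSpace.mp hS
  have hloc : IsLocallyConstant (c ∘ Subtype.val : S → Y) :=
    (IsLocallyConstant.iff_eventually_eq _).mpr fun z =>
      continuous_subtype_val.continuousAt.eventually
        (eventually_eq_of_margin_ne_zero c (hS_pos z z.2))
  exact hxy (hloc.apply_eq_of_preconnectedSpace ⟨x, hx⟩ ⟨y, hy⟩)

end Margin

namespace IsLengthSpace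

variable {X : Type*} [MetricSpace X]

lemma exists_path_eVariationOn_lt (hX : IsLengthSpace X) {x x' : X} {r : ℝ≥0∞}
    (h : edist x x' < r) :
    ∃ γ : ℝ → X, ContinuousOn γ (Set.Icc 0 1) ∧ γ 0 = x ∧ γ 1 = x' ∧
      eVariationOn γ (Set.Icc 0 1) < r := by
  simpa only [hX x x', iInf_lt_iff, exists_prop] using h

lemma exists_margin_eq_zero_edist_lt {Y : Type*} (hX : IsLengthSpace X) (c : X → Y)
    {x x' : X} (hx' : c x' ≠ c x) {r : ℝ≥0∞} (h : edist x x' < r) :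
    ∃ z, margin c z = 0 ∧ edist x z < r := by
  obtain ⟨γ, hγ, rfl, rfl, hlen⟩ := hX.exists_path_eVariationOn_lt h
  have h0 : (0 : ℝ) ∈ Set.Icc 0 1 := ⟨le_rfl, zero_le_one⟩
  have h1 : (1 : ℝ) ∈ Set.Icc 0 1 := ⟨zero_le_one, le_rfl⟩
  obtain ⟨_, ⟨s, hs, rfl⟩, hz⟩ := (isPreconnected_Icc.image γ hγ).exists_margin_eq_zero c
    (Set.mem_image_of_mem γ h0) (Set.mem_image_of_mem γ h1) hx'.symm
  exact ⟨γ s, hz, (eVariationOn.edist_le γ h0 hs).trans_lt hlen⟩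

end IsLengthSpace

/-- In a length space, for every `r > 0` the set of points of margin less than `r`
is exactly the open `r`-thickening of the boundary set `∂X = {z | m_c(z) = 0}`. -/
theorem margin_lt_iff_near_boundary {X Y : Type*} [MetricSpace X]
    (hX : IsLengthSpace X) (c : X → Y) :
    ∀ r : ℝ≥0∞, 0 < r →
      {x : X | margin c x < r} = {x : X | ∃ z : X, margin c z = 0 ∧ edist x z < r} := by
  intro r _
  ext x
  constructor
  · intro hx
    obtain ⟨x', hx', hlt⟩ := (margin_lt_iff c).mp hx
    exact hX.exists_margin_eq_zero_edist_lt c hx' hlt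
  · rintro ⟨z, hz, hlt⟩
    calc margin c x ≤ edist x z + margin c z := margin_le_edist_add_margin c x z
      _ < r := by rwa [hz, add_zero]
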